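/- At θ = 0 (low loyalty), the symmetric equilibrium effort a*(0, n) = (1/n)·(ωβ/(nc))^(1/(1−β)) is strictly decreasing in team size n (treated as a real variable n ≥ 1). -/

import Mathlib

/-! With `K = ωβ/c` and `p = 1/(1-β) > 0`, the effort equals `K ^ p * n ^ (-(1 + p))`,
a negative power of `n` times a positive constant. -/

open Real Set

lemma one_div_mul_div_rpow_eq {K n : ℝ} (hK : 0 ≤ K) (hn : 0 < n) (p : ℝ) :
    1 / n * (K / n) ^ p = K ^ p * n ^ (-(1 + p)) := by
  rw [div_rpow hK hn.le, rpow_neg hn.le, rpow_add hn, rpow_one]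
  field_simp

lemma strictAntiOn_one_div_mul_div_rpow {K p : ℝ} (hK : 0 < K) (hp : -1 < p) :
    StrictAntiOn (fun n : ℝ => 1 / n * (K / n) ^ p) (Ioi 0) := by
  have hclosed : StrictAntiOn (fun n : ℝ => K ^ p * n ^ (-(1 + p))) (Ioi 0) :=
    fun _ ha _ _ hab =>
      mul_lt_mul_of_pos_left (rpow_lt_rpow_of_neg ha hab (by linarith)) (rpow_pos_of_pos hK p)
  exact hclosed.congr fun n hn => (one_div_mul_div_rpow_eq hK.le hn p).symm

theorem zero_loyalty_effort_decreasing_in_team_size (ω c β : ℝ)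
    (hω : 0 < ω) (hc : 0 < c) (hβ0 : 0 < β) (hβ1 : β < 1) :
    StrictAntiOn (fun n : ℝ => (1 / n) * (ω * β / (n * c)) ^ (1 / (1 - β)))
      (Set.Ici 1) := by
  have hexp : -1 < 1 / (1 - β) := by
    have : 0 < 1 / (1 - β) := one_div_pos.mpr (by linarith)
    linarith
  have hdecr := strictAntiOn_one_div_mul_div_rpow (by positivity : 0 < ω * β / c) hexp
  have hbase : ∀ n : ℝ, ω * β / (n * c) = ω * β / c / n := fun n => by
    rw [div_div, mul_comm c]
  simp only [hbase]
  exact hdecr.mono fun n (hn : 1 ≤ n) => zero_lt_one.trans_le hn
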